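/- Let d and r₂ be positive integers and k ∈ ℤ_{++}^{r₂} (with the convention k_{r₂+1} := 0). Then, in ℂ[X], the polynomial ∏_{1≤i<j≤r₂+1}(X − d(i+j−3)/4)_{k_i+k_j} divides the polynomial (X)_{φ₁(k),d} · ∏_{1≤i<j≤r₂}(X − d(i+j−2)/4)_{k_i+k_j}, where (X)_{φ₁(k),d} := ∏_{a=1}^{r₂}(X − d(a−1)/2)_{φ₁(k)_a}. Equivalently, the rational function (λ)_{φ₁(k),d} · C₁^{d,d/2}(λ,k) extends to a polynomial in λ. -/

import Mathlib

open Polynomial Finset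

/-- `(X - c)_m := ∏_{t=0}^{m-1} (X - c + t)` in `ℂ[X]`. -/
noncomputable def pochPoly (c : ℂ) (m : ℕ) : Polynomial ℂ :=
  ∏ t ∈ Finset.range m, (Polynomial.X - Polynomial.C c + (t : Polynomial ℂ))

/-- `φ₁(k)_a := min{k_i + k_j : 1 ≤ i < j ≤ r₂+1, i+j = 2a+1}`. -/
noncomputable def phi1 (r₂ : ℕ) (k : ℕ → ℕ) (a : ℕ) : ℕ :=
  sInf {m : ℕ | ∃ i j : ℕ, 1 ≤ i ∧ i < j ∧ j ≤ r₂ + 1 ∧ i + j = 2 * a + 1 ∧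
    m = k i + k j}

/-- The denominator `∏_{1≤i<j≤r₂+1}(X − d(i+j−3)/4)_{k_i+k_j}` of `C₁^{d,d/2}`. -/
noncomputable def denom1 (d r₂ : ℕ) (k : ℕ → ℕ) : Polynomial ℂ :=
  ∏ i ∈ Finset.Icc 1 (r₂ + 1), ∏ j ∈ Finset.Icc (i + 1) (r₂ + 1),
    pochPoly ((d : ℂ) * ((i : ℂ) + (j : ℂ) - 3) / 4) (k i + k j)

/-- The numerator `∏_{1≤i<j≤r₂}(X − d(i+j−2)/4)_{k_i+k_j}` of `C₁^{d,d/2}`. -/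
noncomputable def numer1 (d r₂ : ℕ) (k : ℕ → ℕ) : Polynomial ℂ :=
  ∏ i ∈ Finset.Icc 1 r₂, ∏ j ∈ Finset.Icc (i + 1) r₂,
    pochPoly ((d : ℂ) * ((i : ℂ) + (j : ℂ) - 2) / 4) (k i + k j)

/-- The polynomial `(X)_{φ₁(k),d} = ∏_{a=1}^{r₂}(X − d(a−1)/2)_{φ₁(k)_a}`. -/
noncomputable def phiPoly1 (d r₂ : ℕ) (k : ℕ → ℕ) : Polynomial ℂ :=
  ∏ a ∈ Finset.Icc 1 r₂,
    pochPoly ((d : ℂ) * ((a : ℂ) - 1) / 2) (phi1 r₂ k a)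

/-!
Every factor of the denominator divides a distinct factor of the product. The pair `i < j` has
shift `d(i+j-3)/4`, which is the shift of the numerator pairs with `p + q = i + j - 1` and, when
`i + j = 2a + 1`, that of the `a`-th factor of `(X)_{φ₁(k),d}`. As `k` is antitone, sending
`(i, j)` to `(i, j - 1)` or `(i - 1, j)` only lengthens the Pochhammer symbol. On an odd
antidiagonal `i + j = 2a + 1` a pair `(i*, j*)` realising `φ₁(k)_a` goes to the `a`-th factor of
`(X)_{φ₁(k),d}`; pairs with `i < i*` lower `j`, pairs with `i > i*` lower `i` (so `j < j* ≤ r₂ + 1`),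
and the images stay in `1 ≤ p < q ≤ r₂` and are pairwise distinct.
-/

lemma prod_dvd_prod_of_injOn {α β M : Type*} [CommMonoid M] [DecidableEq β]
    {s : Finset α} {t : Finset β} {f : α → M} {h : β → M} (g : α → β)
    (hinj : Set.InjOn g s) (hmem : ∀ x ∈ s, g x ∈ t) (hdvd : ∀ x ∈ s, f x ∣ h (g x)) :
    ∏ x ∈ s, f x ∣ ∏ y ∈ t, h y :=
  calc ∏ x ∈ s, f x ∣ ∏ x ∈ s, h (g x) := prod_dvd_prod_of_dvd _ _ hdvd
    _ = ∏ y ∈ s.image g, h y := (prod_image fun _ ha _ hb hab => hinj ha hb hab).symm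
    _ ∣ ∏ y ∈ t, h y := prod_dvd_prod_of_subset _ _ _ (image_subset_iff.2 hmem)

lemma pochPoly_dvd_pochPoly (c : ℂ) {m n : ℕ} (h : m ≤ n) : pochPoly c m ∣ pochPoly c n :=
  prod_dvd_prod_of_subset _ _ _ (range_subset_range.2 h)

lemma antitoneOn_Icc_succ {r : ℕ} {k : ℕ → ℕ}
    (hk : ∀ i j, 1 ≤ i → i ≤ j → j ≤ r → k j ≤ k i) (hk0 : k (r + 1) = 0) :
    AntitoneOn k (Set.Icc 1 (r + 1)) := by
  rintro i ⟨hi1, hi⟩ j ⟨-, hj⟩ hij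
  rcases hj.lt_or_eq with hj | rfl
  · exact hk i j hi1 hij (by omega)
  · rcases hij.lt_or_eq with _ | rfl
    · simp [hk0]
    · rfl

section Matching

variable (d r₂ : ℕ) (k : ℕ → ℕ)

abbrev ltPairs (n : ℕ) : Finset (Σ _ : ℕ, ℕ) := (Icc 1 n).sigma fun i => Icc (i + 1) n

noncomputable def denomFactor (x : Σ _ : ℕ, ℕ) : ℂ[X] :=
  pochPoly ((d : ℂ) * ((x.1 : ℂ) + (x.2 : ℂ) - 3) / 4) (k x.1 + k x.2)

noncomputable def numerFactor (x : Σ _ : ℕ, ℕ) : ℂ[X] :=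
  pochPoly ((d : ℂ) * ((x.1 : ℂ) + (x.2 : ℂ) - 2) / 4) (k x.1 + k x.2)

noncomputable def phiFactor (a : ℕ) : ℂ[X] :=
  pochPoly ((d : ℂ) * ((a : ℂ) - 1) / 2) (phi1 r₂ k a)

lemma denom1_eq_prod_ltPairs : denom1 d r₂ k = ∏ x ∈ ltPairs (r₂ + 1), denomFactor d k x := by
  rw [denom1, prod_sigma]; rfl

lemma phiPoly1_mul_numer1_eq_prod_disjSum :
    phiPoly1 d r₂ k * numer1 d r₂ k =
      ∏ y ∈ (Icc 1 r₂).disjSum (ltPairs r₂), Sum.elim (phiFactor d r₂ k) (numerFactor d k) y := by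
  rw [prod_disjSum, phiPoly1, numer1, prod_sigma]; rfl

lemma phi1_mem {a : ℕ} (ha1 : 1 ≤ a) (ha : a ≤ r₂) :
    phi1 r₂ k a ∈
      {m : ℕ | ∃ i j : ℕ, 1 ≤ i ∧ i < j ∧ j ≤ r₂ + 1 ∧ i + j = 2 * a + 1 ∧ m = k i + k j} :=
  Nat.sInf_mem ⟨_, a, a + 1, ha1, by omega, by omega, by omega, rfl⟩

noncomputable def phi1ArgMin (a : ℕ) : ℕ :=
  sInf {i : ℕ | ∃ j : ℕ, 1 ≤ i ∧ i < j ∧ j ≤ r₂ + 1 ∧ i + j = 2 * a + 1 ∧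
    k i + k j = phi1 r₂ k a}

lemma phi1ArgMin_mem {a : ℕ} (ha1 : 1 ≤ a) (ha : a ≤ r₂) :
    phi1ArgMin r₂ k a ∈ {i : ℕ | ∃ j : ℕ, 1 ≤ i ∧ i < j ∧ j ≤ r₂ + 1 ∧ i + j = 2 * a + 1 ∧
      k i + k j = phi1 r₂ k a} := by
  obtain ⟨i, j, h1, h2, h3, h4, h5⟩ := phi1_mem r₂ k ha1 ha
  exact Nat.sInf_mem ⟨i, j, h1, h2, h3, h4, h5.symm⟩

/-- Where each denominator factor is sent: `inl a` is the `a`-th factor of `(X)_{φ₁(k),d}`,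
`inr (p, q)` a numerator factor. -/
noncomputable def denomMatch (x : Σ _ : ℕ, ℕ) : ℕ ⊕ (Σ _ : ℕ, ℕ) :=
  if (x.1 + x.2) % 2 = 0 ∨ x.1 < phi1ArgMin r₂ k ((x.1 + x.2) / 2) then Sum.inr ⟨x.1, x.2 - 1⟩
  else if x.1 = phi1ArgMin r₂ k ((x.1 + x.2) / 2) then Sum.inl ((x.1 + x.2) / 2)
  else Sum.inr ⟨x.1 - 1, x.2⟩

lemma denomMatch_injOn : Set.InjOn (denomMatch r₂ k) (ltPairs (r₂ + 1)) := by
  rintro ⟨i₁, j₁⟩ hx ⟨i₂, j₂⟩ hy hg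
  simp only [coe_sigma, Set.mem_sigma_iff, coe_Icc, Set.mem_Icc] at hx hy
  have hsame : (i₁ + j₁) / 2 = (i₂ + j₂) / 2 →
      phi1ArgMin r₂ k ((i₁ + j₁) / 2) = phi1ArgMin r₂ k ((i₂ + j₂) / 2) := congrArg _
  simp only [denomMatch] at hg
  split_ifs at hg <;>
    simp only [Sum.inl.injEq, Sum.inr.injEq, Sigma.mk.inj_iff, heq_eq_eq] at hg ⊢ <;>
    omega

lemma denomFactor_dvd_numerFactor {i j p q : ℕ} (hsum : p + q + 1 = i + j)
    (hle : k i + k j ≤ k p + k q) : denomFactor d k ⟨i, j⟩ ∣ numerFactor d k ⟨p, q⟩ := by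
  have hshift : (d : ℂ) * ((p : ℂ) + (q : ℂ) - 2) / 4 = (d : ℂ) * ((i : ℂ) + (j : ℂ) - 3) / 4 := by
    rw [← Nat.cast_add, ← Nat.cast_add, ← hsum]; push_cast; ring
  rw [denomFactor, numerFactor, hshift]
  exact pochPoly_dvd_pochPoly _ hle

lemma denomFactor_eq_phiFactor {i j a : ℕ} (hsum : i + j = 2 * a + 1)
    (hphi : k i + k j = phi1 r₂ k a) : denomFactor d k ⟨i, j⟩ = phiFactor d r₂ k a := by
  have hshift : (d : ℂ) * ((a : ℂ) - 1) / 2 = (d : ℂ) * ((i : ℂ) + (j : ℂ) - 3) / 4 := by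
    rw [← Nat.cast_add, hsum]; push_cast; ring
  rw [denomFactor, phiFactor, hshift, hphi]

lemma denomMatch_mem {x : Σ _ : ℕ, ℕ} (hx : x ∈ ltPairs (r₂ + 1)) :
    denomMatch r₂ k x ∈ (Icc 1 r₂).disjSum (ltPairs r₂) := by
  obtain ⟨i, j⟩ := x
  simp only [mem_sigma, mem_Icc] at hx
  obtain ⟨j', hA, hlt, hle, hsum, -⟩ :=
    phi1ArgMin_mem r₂ k (a := (i + j) / 2) (by omega) (by omega)
  simp only [denomMatch]
  split_ifs <;> simp only [inl_mem_disjSum, inr_mem_disjSum, mem_sigma, mem_Icc] <;> omega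

lemma denomFactor_dvd_denomMatch (hk : AntitoneOn k (Set.Icc 1 (r₂ + 1)))
    {x : Σ _ : ℕ, ℕ} (hx : x ∈ ltPairs (r₂ + 1)) :
    denomFactor d k x ∣ Sum.elim (phiFactor d r₂ k) (numerFactor d k) (denomMatch r₂ k x) := by
  obtain ⟨i, j⟩ := x
  simp only [mem_sigma, mem_Icc] at hx
  obtain ⟨j', hA, hlt, hle, hsum, hphi⟩ :=
    phi1ArgMin_mem r₂ k (a := (i + j) / 2) (by omega) (by omega)
  simp only [denomMatch]
  split_ifs with _ hmin
  · refine denomFactor_dvd_numerFactor d k (by omega) (Nat.add_le_add_left ?_ _)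
    exact hk ⟨by omega, by omega⟩ ⟨by omega, by omega⟩ (by omega)
  · obtain rfl : j' = j := by omega
    rw [← hmin] at hphi
    exact (denomFactor_eq_phiFactor d r₂ k (by omega) hphi).dvd
  · refine denomFactor_dvd_numerFactor d k (by omega) (Nat.add_le_add_right ?_ _)
    exact hk ⟨by omega, by omega⟩ ⟨by omega, by omega⟩ (by omega)

end Matching

theorem denom_dvd_phiPoly_mul_numer_simple₁_general (d r₂ : ℕ)
    (k : ℕ → ℕ) (hk : ∀ i j, 1 ≤ i → i ≤ j → j ≤ r₂ → k j ≤ k i)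
    (hk0 : k (r₂ + 1) = 0) :
    denom1 d r₂ k ∣ phiPoly1 d r₂ k * numer1 d r₂ k := by
  have hanti := antitoneOn_Icc_succ hk hk0
  rw [denom1_eq_prod_ltPairs, phiPoly1_mul_numer1_eq_prod_disjSum]
  exact prod_dvd_prod_of_injOn (denomMatch r₂ k) (denomMatch_injOn r₂ k)
    (fun _ hx => denomMatch_mem r₂ k hx) (fun _ hx => denomFactor_dvd_denomMatch d r₂ k hanti hx)

/-- Theorem 6.2 (case ε₂ = 1, d₂ = d/2, restricted): `(λ)_{φ₁(k),d}·C₁^{d,d/2}(λ,k)`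
is a polynomial in `λ`. -/
theorem denom_dvd_phiPoly_mul_numer_simple₁ (d r₂ : ℕ) (hd : 0 < d) (hr₂ : 0 < r₂)
    (k : ℕ → ℕ) (hk : ∀ i j, 1 ≤ i → i ≤ j → j ≤ r₂ → k j ≤ k i)
    (hk0 : k (r₂ + 1) = 0) :
    denom1 d r₂ k ∣ phiPoly1 d r₂ k * numer1 d r₂ k :=
  denom_dvd_phiPoly_mul_numer_simple₁_general d r₂ k hk hk0
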